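/- If in addition there exists c ∈ (a,b) such that ϕ'(θ) ≤ 0 for all θ ∈ (a,c] and ϕ'(θ) ≥ 0 for all θ ∈ [c,b), then the function w(θ̃) = u_I'(c)·u_II(θ̃) − u_I(θ̃)·u_II'(c) satisfies w(θ̃)² ≤ 1 for all θ̃ ∈ (a,b). -/

import Mathlib

/-!
Any solution `w` of `w'' + ϕ w = 0` has the energy `E = w'² / ϕ + w²` with `E' = -w'² ϕ' / ϕ²`,
so `E` increases while `ϕ` decreases and decreases while `ϕ` increases: it is maximal at the
minimum point `c` of `ϕ`, and `w² ≤ E ≤ E(c)`. The combination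
`w = u_I'(c) u_II - u_I u_II'(c)` solves the equation with `w'(c) = 0` and, by the Wronskian
normalization, `w(c) = -1`, so `E(c) = 1`.
-/

open Set

theorem isMaxOn_Ioo_of_hasDerivAt {f f' : ℝ → ℝ} {a b c : ℝ} (hc : c ∈ Ioo a b)
    (hf : ∀ x ∈ Ioo a b, HasDerivAt f (f' x) x)
    (hleft : ∀ x ∈ Ioo a c, 0 ≤ f' x) (hright : ∀ x ∈ Ioo c b, f' x ≤ 0) :
    IsMaxOn f (Ioo a b) c := by
  have hleft_sub : Ioc a c ⊆ Ioo a b := Ioc_subset_Ioo_right hc.2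
  have hright_sub : Ico c b ⊆ Ioo a b := Ico_subset_Ioo_left hc.1
  have hcont : ContinuousOn f (Ioo a b) := fun x hx => (hf x hx).continuousAt.continuousWithinAt
  have hmono : MonotoneOn f (Ioc a c) := by
    refine monotoneOn_of_hasDerivWithinAt_nonneg (convex_Ioc a c) (hcont.mono hleft_sub)
      (fun x hx => ?_) (fun x hx => hleft x (by rwa [interior_Ioc] at hx))
    rw [interior_Ioc] at hx ⊢
    exact (hf x (hleft_sub (Ioo_subset_Ioc_self hx))).hasDerivWithinAt
  have hanti : AntitoneOn f (Ico c b) := by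
    refine antitoneOn_of_hasDerivWithinAt_nonpos (convex_Ico c b) (hcont.mono hright_sub)
      (fun x hx => ?_) (fun x hx => hright x (by rwa [interior_Ico] at hx))
    rw [interior_Ico] at hx ⊢
    exact (hf x (hright_sub (Ioo_subset_Ico_self hx))).hasDerivWithinAt
  intro x hx
  rcases le_total x c with hxc | hcx
  · exact hmono ⟨hx.1, hxc⟩ ⟨hc.1, le_rfl⟩ hxc
  · exact hanti ⟨le_rfl, hc.2⟩ ⟨hcx, hx.2⟩ hcx

section Energy

variable {ϕ ϕ' w w' : ℝ → ℝ}

theorem hasDerivAt_energy {x : ℝ} (hϕ : HasDerivAt ϕ (ϕ' x) x) (hϕx : ϕ x ≠ 0)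
    (hw : HasDerivAt w (w' x) x) (hw' : HasDerivAt w' (-(ϕ x * w x)) x) :
    HasDerivAt (fun t => w' t ^ 2 / ϕ t + w t ^ 2) (-(w' x ^ 2 * ϕ' x) / ϕ x ^ 2) x := by
  refine (((hw'.fun_pow 2).div hϕ hϕx).add (hw.fun_pow 2)).congr_deriv ?_
  field_simp
  ring

theorem sq_le_energy_of_hasDerivAt {a b c : ℝ} (hc : c ∈ Ioo a b)
    (hϕ : ∀ x ∈ Ioo a b, HasDerivAt ϕ (ϕ' x) x) (hϕpos : ∀ x ∈ Ioo a b, 0 < ϕ x)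
    (hw : ∀ x ∈ Ioo a b, HasDerivAt w (w' x) x)
    (hw' : ∀ x ∈ Ioo a b, HasDerivAt w' (-(ϕ x * w x)) x)
    (hdec : ∀ x ∈ Ioo a c, ϕ' x ≤ 0) (hinc : ∀ x ∈ Ioo c b, 0 ≤ ϕ' x) :
    ∀ x ∈ Ioo a b, w x ^ 2 ≤ w' c ^ 2 / ϕ c + w c ^ 2 := by
  have hmax : IsMaxOn (fun t => w' t ^ 2 / ϕ t + w t ^ 2) (Ioo a b) c := by
    refine isMaxOn_Ioo_of_hasDerivAt hc
      (fun x hx => hasDerivAt_energy (hϕ x hx) (hϕpos x hx).ne' (hw x hx) (hw' x hx))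
      (fun x hx => ?_) (fun x hx => ?_)
    · have := mul_nonpos_of_nonneg_of_nonpos (sq_nonneg (w' x)) (hdec x hx)
      exact div_nonneg (neg_nonneg.mpr this) (sq_nonneg _)
    · have := mul_nonneg (sq_nonneg (w' x)) (hinc x hx)
      exact div_nonpos_of_nonpos_of_nonneg (neg_nonpos.mpr this) (sq_nonneg _)
  intro x hx
  have hkin : 0 ≤ w' x ^ 2 / ϕ x := div_nonneg (sq_nonneg _) (hϕpos x hx).le
  linarith [isMaxOn_iff.mp hmax x hx]

end Energy

theorem stmt_8_general (a b : ℝ)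
    (ϕ ϕd uI uId uIdd uII uIId uIIdd : ℝ → ℝ)
    (hϕd : ∀ θ ∈ Set.Ioo a b, HasDerivAt ϕ (ϕd θ) θ)
    (hϕpos : ∀ θ ∈ Set.Ioo a b, 0 < ϕ θ)
    (huId : ∀ θ ∈ Set.Ioo a b, HasDerivAt uI (uId θ) θ)
    (huIdd : ∀ θ ∈ Set.Ioo a b, HasDerivAt uId (uIdd θ) θ)
    (huIId : ∀ θ ∈ Set.Ioo a b, HasDerivAt uII (uIId θ) θ)
    (huIIdd : ∀ θ ∈ Set.Ioo a b, HasDerivAt uIId (uIIdd θ) θ)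
    (hodeI : ∀ θ ∈ Set.Ioo a b, uIdd θ + ϕ θ * uI θ = 0)
    (hodeII : ∀ θ ∈ Set.Ioo a b, uIIdd θ + ϕ θ * uII θ = 0)
    (hW : ∀ θ ∈ Set.Ioo a b, uI θ * uIId θ - uId θ * uII θ = 1)
    (c : ℝ) (hc : c ∈ Set.Ioo a b)
    (hdec : ∀ θ ∈ Set.Ioc a c, ϕd θ ≤ 0)
    (hinc : ∀ θ ∈ Set.Ico c b, 0 ≤ ϕd θ) :
    ∀ θt ∈ Set.Ioo a b, (uId c * uII θt - uI θt * uIId c) ^ 2 ≤ 1 := by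
  intro θt hθt
  have hbound := sq_le_energy_of_hasDerivAt (w := fun θ => uId c * uII θ - uI θ * uIId c)
    (w' := fun θ => uId c * uIId θ - uId θ * uIId c) hc hϕd hϕpos
    (fun θ hθ => ((huIId θ hθ).const_mul _).sub ((huId θ hθ).mul_const _))
    (fun θ hθ => (((huIIdd θ hθ).const_mul _).sub ((huIdd θ hθ).mul_const _)).congr_deriv
      (by linear_combination uId c * hodeII θ hθ - uIId c * hodeI θ hθ))
    (fun θ hθ => hdec θ (Ioo_subset_Ioc_self hθ)) (fun θ hθ => hinc θ (Ioo_subset_Ico_self hθ))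
    θt hθt
  have hwc : uId c * uII c - uI c * uIId c = -1 := by linarith [hW c hc]
  simpa [hwc] using hbound

/-- w(θ̃) = u_I'(c) u_II(θ̃) − u_I(θ̃) u_II'(c) satisfies w(θ̃)² ≤ 1. -/
theorem stmt_8 (a b : ℝ) (hab : a < b)
    (ϕ ϕd uI uId uIdd uII uIId uIIdd : ℝ → ℝ)
    (hϕd : ∀ θ ∈ Set.Ioo a b, HasDerivAt ϕ (ϕd θ) θ)
    (hϕdc : ContinuousOn ϕd (Set.Ioo a b))
    (hϕpos : ∀ θ ∈ Set.Ioo a b, 0 < ϕ θ)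
    (huId : ∀ θ ∈ Set.Ioo a b, HasDerivAt uI (uId θ) θ)
    (huIdd : ∀ θ ∈ Set.Ioo a b, HasDerivAt uId (uIdd θ) θ)
    (huIId : ∀ θ ∈ Set.Ioo a b, HasDerivAt uII (uIId θ) θ)
    (huIIdd : ∀ θ ∈ Set.Ioo a b, HasDerivAt uIId (uIIdd θ) θ)
    (hodeI : ∀ θ ∈ Set.Ioo a b, uIdd θ + ϕ θ * uI θ = 0)
    (hodeII : ∀ θ ∈ Set.Ioo a b, uIIdd θ + ϕ θ * uII θ = 0)
    (hW : ∀ θ ∈ Set.Ioo a b, uI θ * uIId θ - uId θ * uII θ = 1)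
    (c : ℝ) (hc : c ∈ Set.Ioo a b)
    (hdec : ∀ θ ∈ Set.Ioc a c, ϕd θ ≤ 0)
    (hinc : ∀ θ ∈ Set.Ico c b, 0 ≤ ϕd θ) :
    ∀ θt ∈ Set.Ioo a b, (uId c * uII θt - uI θt * uIId c) ^ 2 ≤ 1 :=
  stmt_8_general a b ϕ ϕd uI uId uIdd uII uIId uIIdd hϕd hϕpos huId huIdd huIId huIIdd hodeI hodeII
    hW c hc hdec hinc
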